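/- arXiv:1302.3897 — 4 statements merged into one kernel-verified Lean document; each statement's English description precedes it below -/
import Mathlib

section
/- Let k be a field of characteristic zero, (R, δ) a k-differential ring, and let A, B be 2×2 matrices over R with det A = 1 and det B = 1. Suppose that every entry of B lies in R₀ = ker δ, that A·X = X·A for every 2×2 trace-zero matrix X over R, and that A·M = M·B for every 2×2 matrix M over R. Then there exists a ∈ R with a² = 1, δ(a) = 0, A = a·1 and B = a·1. Conversely, for any a ∈ R with a² = 1 and δ(a) = 0, the pair A = a·1, B = a·1 satisfies all of these conditions. (This computes the kernel of the homomorphism ι_R : SL₂(R) × SL₂(R₀) → GrAut(F)(R) as μ₂(R₀).) -/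
namespace Matrix

variable {n R : Type*} [Fintype n] [DecidableEq n] [CommSemiring R]

theorem exists_eq_smul_one_of_forall_mul_eq_mul {A B : Matrix n n R}
    (h : ∀ M, A * M = M * B) : ∃ a : R, A = a • 1 ∧ B = a • 1 := by
  have hBA : B = A := by simpa using (h 1).symm
  subst hBA
  have hcenter : B ∈ Set.center (Matrix n n R) :=
    Semigroup.mem_center_iff.mpr fun M => (h M).symm
  rw [center_eq_range] at hcenter
  obtain ⟨a, rfl⟩ := hcenter
  have hscalar : scalar n a = a • 1 := by simp [smul_one_eq_diagonal]
  exact ⟨a, hscalar, hscalar⟩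

end Matrix

theorem kernel_iota_eq_mu2_general
    (k : Type*) [Field k]
    (R : Type*) [CommRing R] [Algebra k R]
    (δ : Derivation k R R)
    (A B : Matrix (Fin 2) (Fin 2) R) :
    (A.det = 1 ∧ B.det = 1 ∧ (∀ i j, δ (B i j) = 0) ∧
      (∀ X : Matrix (Fin 2) (Fin 2) R, X.trace = 0 → A * X = X * A) ∧
      (∀ M : Matrix (Fin 2) (Fin 2) R, A * M = M * B)) ↔
    (∃ a : R, a ^ 2 = 1 ∧ δ a = 0 ∧
      A = a • (1 : Matrix (Fin 2) (Fin 2) R) ∧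
      B = a • (1 : Matrix (Fin 2) (Fin 2) R)) := by
  constructor
  · rintro ⟨hdet, -, hδ, -, hAB⟩
    obtain ⟨a, rfl, rfl⟩ := Matrix.exists_eq_smul_one_of_forall_mul_eq_mul hAB
    exact ⟨a, by simpa [Matrix.det_smul] using hdet, by simpa using hδ 0 0, rfl, rfl⟩
  · rintro ⟨a, ha, hδa, rfl, rfl⟩
    have hdet : (a • 1 : Matrix (Fin 2) (Fin 2) R).det = 1 := by simp [ha]
    refine ⟨hdet, hdet, fun i j => ?_, fun X _ => ((Commute.one_left X).smul_left a).eq,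
      fun M => ((Commute.one_left M).smul_left a).eq⟩
    by_cases hij : i = j <;> simp [hij, hδa]

/-- The kernel of `ι_R : SL₂(R) × SL₂(R₀) → GrAut(F)(R)` is `μ₂(R₀)`:
a pair `(A, B)` with `det A = det B = 1`, `B` with entries in `R₀ = ker δ`,
`A` centralizing the trace-zero matrices and `A·M = M·B` for all `M`,
is exactly a pair `(a·1, a·1)` with `a² = 1` and `δ a = 0`. -/
theorem kernel_iota_eq_mu2
    (k : Type*) [Field k] [CharZero k]
    (R : Type*) [CommRing R] [Algebra k R]
    (δ : Derivation k R R)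
    (A B : Matrix (Fin 2) (Fin 2) R) :
    (A.det = 1 ∧ B.det = 1 ∧ (∀ i j, δ (B i j) = 0) ∧
      (∀ X : Matrix (Fin 2) (Fin 2) R, X.trace = 0 → A * X = X * A) ∧
      (∀ M : Matrix (Fin 2) (Fin 2) R, A * M = M * B)) ↔
    (∃ a : R, a ^ 2 = 1 ∧ δ a = 0 ∧
      A = a • (1 : Matrix (Fin 2) (Fin 2) R) ∧
      B = a • (1 : Matrix (Fin 2) (Fin 2) R)) :=
  kernel_iota_eq_mu2_general k R δ A B
end

section
/- Let R be a commutative ring, δ : R → R a derivation, and let A, B, M, N be 2×2 matrices over R with det A = 1 and det B = 1 (so A⁻¹ = adjugate(A), B⁻¹ = adjugate(B)). Assume δ annihilates every entry of B, M, and N. Then 2·( δ(A·M·B⁻¹)·(A·N·B⁻¹)† − (A·N·B⁻¹)·δ((A·M·B⁻¹)†) ) = δ( A·(M·N† − N·M†)·A⁻¹ ) + 2·tr(M·N†)·( δ(A)·A⁻¹ ), where δ is applied to matrices entrywise. (This is the key computation showing that θ_{A,B} preserves the λ-bracket [G(M)_λ G(N)] in the N=4 Lie conformal superalgebra.) -/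
/-!
The matrices `B`, `M`, `N` are `δ`-constant, so `δ` only hits the outer factors `A` and
`A⁻¹ = adj A`, and `B⁻¹ B = 1` removes `B` from both sides (`(P Q T)† = adj T · Q† · adj P`).
What remains follows from the polarised Cayley–Hamilton identity `M N† + N M† = tr(M N†) · 1`
together with Jacobi's formula `tr(δA · adj A) = δ(det A) = 0`, which, polarised the same way,
gives `A · adj(δA) = -δA · adj A`.
-/

/-- The dagger of a `2×2` matrix `!![a, b; c, d]` is `!![-d, b; c, -a]`,
i.e. the negative of the adjugate. -/
def dagger {R : Type*} [CommRing R] (M : Matrix (Fin 2) (Fin 2) R) :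
    Matrix (Fin 2) (Fin 2) R :=
  -M.adjugate

namespace Matrix

variable {R : Type*} [CommRing R]

theorem map_derivation_mul {S n : Type*} [CommSemiring S] [Algebra S R] [Fintype n]
    (δ : Derivation S R R) (P Q : Matrix n n R) :
    (P * Q).map δ = P.map δ * Q + P * Q.map δ := by
  ext i j
  simp only [map_apply, mul_apply, add_apply, map_sum, Derivation.leibniz, smul_eq_mul,
    Finset.sum_add_distrib, mul_comm (Q _ j), add_comm (∑ x, P i x * _)]

theorem map_derivation_mul_mul_of_map_eq_zero {S n : Type*} [CommSemiring S] [Algebra S R]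
    [Fintype n] (δ : Derivation S R R) {P : Matrix n n R} (hP : P.map δ = 0)
    (L Q : Matrix n n R) :
    (L * P * Q).map δ = L.map δ * P * Q + L * P * Q.map δ := by
  simp only [map_derivation_mul, hP, Matrix.mul_zero, add_zero]

theorem adjugate_map_fin_two {S F : Type*} [CommRing S] [FunLike F R S]
    [AddMonoidHomClass F R S] (f : F) (P : Matrix (Fin 2) (Fin 2) R) :
    (P.map f).adjugate = P.adjugate.map f := by
  simp [adjugate_fin_two, ← Matrix.ext_iff, Fin.forall_fin_two]

theorem map_adjugate_eq_zero_fin_two {S F : Type*} [CommRing S] [FunLike F R S]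
    [AddMonoidHomClass F R S] (f : F) {P : Matrix (Fin 2) (Fin 2) R} (hP : P.map f = 0) :
    P.adjugate.map f = 0 := by
  rw [← adjugate_map_fin_two, hP, adjugate_zero]

theorem adjugate_adjugate_fin_two (P : Matrix (Fin 2) (Fin 2) R) : P.adjugate.adjugate = P := by
  simpa using adjugate_adjugate P (by simp)

theorem mul_adjugate_add_mul_adjugate_fin_two (P Q : Matrix (Fin 2) (Fin 2) R) :
    P * Q.adjugate + Q * P.adjugate = (P * Q.adjugate).trace • 1 := by
  ext i j
  fin_cases i <;> fin_cases j <;> simp [adjugate_fin_two, mul_apply, trace_fin_two] <;> ring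

theorem trace_map_derivation_mul_adjugate_fin_two {S : Type*} [CommSemiring S] [Algebra S R]
    (δ : Derivation S R R) (P : Matrix (Fin 2) (Fin 2) R) :
    (P.map δ * P.adjugate).trace = δ P.det := by
  simp [adjugate_fin_two, mul_apply, trace_fin_two, det_fin_two, Derivation.leibniz]
  ring

theorem mul_adjugate_map_derivation_of_det_eq_one {S : Type*} [CommSemiring S] [Algebra S R]
    (δ : Derivation S R R) {P : Matrix (Fin 2) (Fin 2) R} (hP : P.det = 1) :
    P * (P.map δ).adjugate = -(P.map δ * P.adjugate) := by
  refine eq_neg_of_add_eq_zero_right ?_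
  rw [mul_adjugate_add_mul_adjugate_fin_two, trace_map_derivation_mul_adjugate_fin_two, hP,
    Derivation.map_one_eq_zero, zero_smul]

end Matrix

open Matrix

section Dagger

variable {R : Type*} [CommRing R]

theorem dagger_mul_mul (P Q T : Matrix (Fin 2) (Fin 2) R) :
    dagger (P * Q * T) = T.adjugate * dagger Q * P.adjugate := by
  simp only [dagger, adjugate_mul_distrib, Matrix.neg_mul, Matrix.mul_neg, Matrix.mul_assoc]

theorem mul_dagger_add_mul_dagger (P Q : Matrix (Fin 2) (Fin 2) R) :
    P * dagger Q + Q * dagger P = (P * dagger Q).trace • 1 := by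
  simp only [dagger, Matrix.mul_neg, ← neg_add, mul_adjugate_add_mul_adjugate_fin_two,
    trace_neg, neg_smul]

theorem map_dagger_eq_zero {S : Type*} [CommSemiring S] [Algebra S R] (δ : Derivation S R R)
    {P : Matrix (Fin 2) (Fin 2) R} (hP : P.map δ = 0) : (dagger P).map δ = 0 := by
  rw [dagger, Matrix.map_neg _ (map_neg δ), map_adjugate_eq_zero_fin_two δ hP, neg_zero]

end Dagger

/-- The key computation showing `θ_{A,B}` preserves the bracket `[G(M)_λ G(N)]`:
for `A, B ∈ SL₂(R)` (inverses given by adjugates) with `δ` vanishing on the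
entries of `B`, `M`, `N`,
`2·(δ(A·M·B⁻¹)·(A·N·B⁻¹)† − (A·N·B⁻¹)·δ((A·M·B⁻¹)†))
  = δ(A·(M·N† − N·M†)·A⁻¹) + 2·tr(M·N†)·(δ(A)·A⁻¹)`. -/
theorem theta_preserves_GG_bracket
    {R : Type*} [CommRing R] (δ : Derivation ℤ R R)
    (A B M N : Matrix (Fin 2) (Fin 2) R)
    (hA : A.det = 1) (hB : B.det = 1)
    (hB0 : ∀ i j, δ (B i j) = 0)
    (hM0 : ∀ i j, δ (M i j) = 0)
    (hN0 : ∀ i j, δ (N i j) = 0) :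
    (2 : R) • ( ((A * M * B.adjugate).map (δ : R → R)) * dagger (A * N * B.adjugate)
        - (A * N * B.adjugate) * ((dagger (A * M * B.adjugate)).map (δ : R → R)) )
      = ((A * (M * dagger N - N * dagger M) * A.adjugate).map (δ : R → R))
        + (2 * (M * dagger N).trace) • (A.map (δ : R → R) * A.adjugate) := by
  have hB' : B.map δ = 0 := Matrix.ext hB0
  have hM : M.map δ = 0 := Matrix.ext hM0
  have hN : N.map δ = 0 := Matrix.ext hN0
  have hMdag := map_dagger_eq_zero δ hM
  have hBB (P : Matrix (Fin 2) (Fin 2) R) : B.adjugate * (B * P) = P := by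
    rw [← Matrix.mul_assoc, adjugate_mul, hB, one_smul, Matrix.one_mul]
  have hU : (A * M * B.adjugate).map δ * dagger (A * N * B.adjugate)
      = A.map δ * (M * dagger N) * A.adjugate := by
    rw [map_derivation_mul_mul_of_map_eq_zero δ hM,
      map_adjugate_eq_zero_fin_two δ hB', dagger_mul_mul, adjugate_adjugate_fin_two]
    simp only [Matrix.mul_zero, add_zero, Matrix.mul_assoc, hBB]
  have hV : A * N * B.adjugate * (dagger (A * M * B.adjugate)).map δ
      = A * (N * dagger M) * (A.map δ).adjugate := by
    rw [dagger_mul_mul, adjugate_adjugate_fin_two, map_derivation_mul_mul_of_map_eq_zero δ hMdag,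
      hB', adjugate_map_fin_two]
    simp only [Matrix.zero_mul, zero_add, Matrix.mul_assoc, hBB]
  have hC : (M * dagger N - N * dagger M).map δ = 0 := by
    simp only [Matrix.map_sub _ (map_sub δ), map_derivation_mul, hM, hN, hMdag,
      map_dagger_eq_zero δ hN, Matrix.mul_zero, Matrix.zero_mul, add_zero, sub_zero]
  rw [hU, hV, map_derivation_mul_mul_of_map_eq_zero δ hC, ← adjugate_map_fin_two,
    eq_sub_of_add_eq' (mul_dagger_add_mul_dagger M N)]
  simp only [Matrix.mul_sub, Matrix.sub_mul, Matrix.mul_smul, Matrix.smul_mul, Matrix.mul_one,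
    mul_adjugate_map_derivation_of_det_eq_one δ hA, smul_neg]
  module
end

section
/- Let R be a commutative ℚ-algebra, δ : R → R a derivation, and A a 2×2 matrix over R with det A = 1 (so A⁻¹ = adjugate(A)). Let X₀ be a 2×2 trace-zero matrix over R such that δ(A·Z·A⁻¹) = [X₀, A·Z·A⁻¹] for each Z ∈ {!![0,1;0,0], !![0,0;1,0], !![1,0;0,-1]} (a basis of the trace-zero 2×2 matrices), where δ is applied entrywise and [X, Y] = X·Y − Y·X. Then X₀ = δ(A)·A⁻¹. -/
/-!
Differentiating `A Z A⁻¹` for a constant `Z` gives `[δA · A⁻¹, A Z A⁻¹]`, so `B = δA · A⁻¹`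
satisfies the same equations as `X₀`, and `A⁻¹ (X₀ - B) A` commutes with the elementary matrices
`E₁₂` and `E₂₁`, hence is scalar. By Jacobi's formula `tr B = δ(det A) = 0`, so this scalar
matrix has trace zero, and since `2` is invertible it vanishes.
-/

open Matrix

namespace Derivation

variable {S A n : Type*}

section CommSemiring

variable [CommSemiring S] [CommSemiring A] [Algebra S A] (D : Derivation S A A)

theorem map_matrix_mul [Fintype n] (M N : Matrix n n A) :
    (M * N).map D = M.map D * N + M * N.map D := by
  ext i j
  simp only [Matrix.add_apply, mul_apply, map_apply, map_sum, leibniz, smul_eq_mul,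
    ← Finset.sum_add_distrib]
  exact Finset.sum_congr rfl fun _ _ => by ring

theorem map_matrix_one [DecidableEq n] : (1 : Matrix n n A).map D = 0 := by
  ext i j
  by_cases h : i = j <;> simp [one_apply, h]

end CommSemiring

variable [CommSemiring S] [CommRing A] [Algebra S A] (D : Derivation S A A)

theorem trace_map_matrix_mul_adjugate_fin_two (M : Matrix (Fin 2) (Fin 2) A) :
    (M.map D * M.adjugate).trace = D M.det := by
  simp only [trace_fin_two, adjugate_fin_two, det_fin_two, mul_apply, Fin.sum_univ_two,
    map_apply, of_apply, cons_val', cons_val_zero, cons_val_one, empty_val', cons_val_fin_one,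
    leibniz, smul_eq_mul, map_sub]
  ring

variable [Fintype n] [DecidableEq n]

theorem map_matrix_of_mul_eq_one {M M' : Matrix n n A} (h : M' * M = 1) (h' : M * M' = 1) :
    M'.map D = -(M' * (M.map D * M')) := by
  have hD : M'.map D * M + M' * M.map D = 0 := by
    rw [← map_matrix_mul, h, map_matrix_one]
  calc M'.map D = (M'.map D * M + M' * M.map D) * M' - M' * (M.map D * M') := by
        rw [add_mul, mul_assoc, h', mul_one, mul_assoc]; abel
    _ = -(M' * (M.map D * M')) := by rw [hD, zero_mul, zero_sub]

theorem map_matrix_conj {M M' Z : Matrix n n A} (h : M' * M = 1) (h' : M * M' = 1)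
    (hZ : Z.map D = 0) :
    (M * Z * M').map D = M.map D * M' * (M * Z * M') - M * Z * M' * (M.map D * M') := by
  rw [map_matrix_mul, map_matrix_mul, hZ, map_matrix_of_mul_eq_one D h h']
  calc _ = M.map D * Z * M' - M * Z * M' * (M.map D * M') := by noncomm_ring
    _ = M.map D * (M' * M) * Z * M' - M * Z * M' * (M.map D * M') := by rw [h, mul_one]
    _ = _ := by noncomm_ring

end Derivation

theorem Commute.conj_of_mul_eq_one {M : Type*} [Monoid M] {a a' x y : M} (h : a' * a = 1)
    (hxy : Commute x (a * y * a')) : Commute (a' * x * a) y :=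
  calc a' * x * a * y = a' * (x * (a * y * a')) * a := by
        simp only [mul_assoc, h, mul_one]
    _ = a' * ((a * y * a') * x) * a := by rw [hxy.eq]
    _ = y * (a' * x * a) := by simp only [← mul_assoc, h, one_mul]

theorem commute_sub_of_mul_sub_mul_eq {α : Type*} [Ring α] {x b c : α}
    (h : x * c - c * x = b * c - c * b) : Commute (x - b) c := by
  unfold Commute SemiconjBy
  rw [sub_mul, mul_sub]
  linear_combination (norm := noncomm_ring) h

theorem Matrix.eq_zero_of_commute_single_of_trace_eq_zero {n α : Type*} [Fintype n]
    [DecidableEq n] [Semiring α] {M : Matrix n n α}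
    (hM : Pairwise fun i j => Commute (single i j 1) M) (htr : M.trace = 0)
    (hn : IsUnit (Fintype.card n : α)) : M = 0 := by
  obtain ⟨r, rfl⟩ := mem_range_scalar_of_commute_single hM
  have : (Fintype.card n : α) * r = 0 := by
    simpa [scalar_apply, trace_diagonal, Finset.sum_const, nsmul_eq_mul] using htr
  rw [hn.mul_right_eq_zero.mp this, map_zero]

theorem X0_eq_logDeriv_general
    {R : Type*} [CommRing R] [Algebra ℚ R] (δ : Derivation ℚ R R)
    (A X₀ : Matrix (Fin 2) (Fin 2) R) (hA : A.det = 1)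
    (hX₀ : X₀.trace = 0)
    (h1 : (A * !![(0 : R), 1; 0, 0] * A.adjugate).map (δ : R → R)
      = X₀ * (A * !![(0 : R), 1; 0, 0] * A.adjugate)
        - (A * !![(0 : R), 1; 0, 0] * A.adjugate) * X₀)
    (h2 : (A * !![(0 : R), 0; 1, 0] * A.adjugate).map (δ : R → R)
      = X₀ * (A * !![(0 : R), 0; 1, 0] * A.adjugate)
        - (A * !![(0 : R), 0; 1, 0] * A.adjugate) * X₀) :
    X₀ = A.map (δ : R → R) * A.adjugate := by
  have hadjA : A.adjugate * A = 1 := by rw [adjugate_mul, hA, one_smul]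
  have hAadj : A * A.adjugate = 1 := by rw [mul_adjugate, hA, one_smul]
  set Y := X₀ - A.map δ * A.adjugate with hYdef
  have hcomm (i j : Fin 2) (hZ : (A * single i j 1 * A.adjugate).map δ
      = X₀ * (A * single i j 1 * A.adjugate) - A * single i j 1 * A.adjugate * X₀) :
      Commute (single i j 1) (A.adjugate * Y * A) := by
    refine (Commute.conj_of_mul_eq_one hadjA (commute_sub_of_mul_sub_mul_eq ?_)).symm
    rw [← hZ, δ.map_matrix_conj hadjA hAadj (by simp [map_single])]
  have hY : A.adjugate * Y * A = 0 := by
    refine eq_zero_of_commute_single_of_trace_eq_zero ?_ ?_ ?_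
    · have e01 : !![(0 : R), 1; 0, 0] = single 0 1 1 := by
        ext i j; fin_cases i <;> fin_cases j <;> rfl
      have e10 : !![(0 : R), 0; 1, 0] = single 1 0 1 := by
        ext i j; fin_cases i <;> fin_cases j <;> rfl
      rw [e01] at h1
      rw [e10] at h2
      intro i j hij
      fin_cases i <;> fin_cases j
      exacts [absurd rfl hij, hcomm 0 1 h1, hcomm 1 0 h2, absurd rfl hij]
    · rw [trace_mul_cycle, hAadj, one_mul, trace_sub, hX₀,
        δ.trace_map_matrix_mul_adjugate_fin_two, hA, δ.map_one_eq_zero, sub_zero]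
    · simpa only [Fintype.card_fin, Nat.cast_ofNat, map_ofNat] using
        (isUnit_of_invertible (2 : ℚ)).map (algebraMap ℚ R)
  have hY0 : Y = A * (A.adjugate * Y * A) * A.adjugate := by
    simp only [← mul_assoc, hAadj, one_mul]
    rw [mul_assoc, hAadj, mul_one]
  rwa [hY, mul_zero, zero_mul, hYdef, sub_eq_zero] at hY0

/-- If a trace-zero matrix `X₀` satisfies `δ(A·Z·A⁻¹) = [X₀, A·Z·A⁻¹]` for `Z`
running through the standard basis `!![0,1;0,0], !![0,0;1,0], !![1,0;0,-1]` of
the trace-zero `2×2` matrices, and `det A = 1` (so `A⁻¹ = adjugate A`),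
then `X₀ = δ(A)·A⁻¹`. -/
theorem X0_eq_logDeriv
    {R : Type*} [CommRing R] [Algebra ℚ R] (δ : Derivation ℚ R R)
    (A X₀ : Matrix (Fin 2) (Fin 2) R) (hA : A.det = 1)
    (hX₀ : X₀.trace = 0)
    (h1 : (A * !![(0 : R), 1; 0, 0] * A.adjugate).map (δ : R → R)
      = X₀ * (A * !![(0 : R), 1; 0, 0] * A.adjugate)
        - (A * !![(0 : R), 1; 0, 0] * A.adjugate) * X₀)
    (h2 : (A * !![(0 : R), 0; 1, 0] * A.adjugate).map (δ : R → R)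
      = X₀ * (A * !![(0 : R), 0; 1, 0] * A.adjugate)
        - (A * !![(0 : R), 0; 1, 0] * A.adjugate) * X₀)
    (h3 : (A * !![(1 : R), 0; 0, -1] * A.adjugate).map (δ : R → R)
      = X₀ * (A * !![(1 : R), 0; 0, -1] * A.adjugate)
        - (A * !![(1 : R), 0; 0, -1] * A.adjugate) * X₀) :
    X₀ = A.map (δ : R → R) * A.adjugate :=
  X0_eq_logDeriv_general δ A X₀ hA hX₀ h1 h2
end

section
/- Let S be a commutative ℚ-algebra and let ν be an S-linear endomorphism of the S-module of 2×2 matrices over S such that ν(X·M) = X·ν(M) for every trace-zero 2×2 matrix X over S and every 2×2 matrix M over S. Then ν(M) = M·ν(1) for every 2×2 matrix M over S, where 1 is the identity matrix; that is, ν is right multiplication by the matrix B⁻¹ := ν(1). In particular, if ν is bijective then ν(1) is invertible. -/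
/-! Since `2` is invertible in `S`, every matrix splits as `M = (tr M / 2) • 1 + X` with `X`
trace-zero, and `ν X = ν (X * 1) = X * ν 1`; linearity gives `ν M = M * ν 1`. -/

namespace Matrix

variable {n R : Type*} [Fintype n] [DecidableEq n] [CommRing R]

theorem trace_sub_smul_one_eq_zero {c : R} (hc : c * Fintype.card n = 1) (M : Matrix n n R) :
    (M - (c * M.trace) • 1).trace = 0 := by
  rw [trace_sub, trace_smul, trace_one, smul_eq_mul, mul_right_comm, hc, one_mul, sub_self]

theorem linearMap_apply_eq_mul_apply_one (hn : IsUnit (Fintype.card n : R))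
    (ν : Matrix n n R →ₗ[R] Matrix n n R) (h : ∀ X : Matrix n n R, X.trace = 0 → ν X = X * ν 1)
    (M : Matrix n n R) : ν M = M * ν 1 := by
  obtain ⟨c, hc⟩ := hn.exists_left_inv
  set X := M - (c * M.trace) • (1 : Matrix n n R)
  have hM : M = (c * M.trace) • 1 + X := (add_sub_cancel _ _).symm
  calc ν M = (c * M.trace) • ν 1 + ν X := by rw [hM, map_add, map_smul, ← hM]
    _ = ((c * M.trace) • 1 + X) * ν 1 := by
      rw [h X (trace_sub_smul_one_eq_zero hc M), add_mul, smul_mul, one_mul]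
    _ = M * ν 1 := by rw [← hM]

end Matrix

/-- An `S`-linear endomorphism `ν` of `S^{2×2}` commuting with left multiplication
by all trace-zero matrices is right multiplication by `ν(1)`; in particular,
if `ν` is bijective then `ν(1)` is invertible. -/
theorem sl2_equivariant_is_right_mul
    {S : Type*} [CommRing S] [Algebra ℚ S]
    (ν : Matrix (Fin 2) (Fin 2) S →ₗ[S] Matrix (Fin 2) (Fin 2) S)
    (h : ∀ X M : Matrix (Fin 2) (Fin 2) S, X.trace = 0 → ν (X * M) = X * ν M) :
    (∀ M : Matrix (Fin 2) (Fin 2) S, ν M = M * ν 1) ∧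
    (Function.Bijective ν → IsUnit (ν 1)) := by
  have two_isUnit : IsUnit (Fintype.card (Fin 2) : S) := by
    have := (isUnit_iff_ne_zero.mpr two_ne_zero : IsUnit (2 : ℚ)).map (algebraMap ℚ S)
    rwa [map_ofNat] at this
  have right_mul : ∀ M, ν M = M * ν 1 :=
    Matrix.linearMap_apply_eq_mul_apply_one two_isUnit ν fun X hX => by simpa using h X 1 hX
  refine ⟨right_mul, fun hν => ?_⟩
  obtain ⟨A, hA⟩ := hν.surjective 1
  exact IsUnit.of_mul_eq_one_right A (by rw [← right_mul, hA])
end
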